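/- Let X be a topological space, k ≥ 1, and x₀, …, x_k points of X. For paths γᵢ from x_{i−1} to xᵢ (1 ≤ i ≤ k), let ⟨γ₁, …, γ_k⟩ : [0,k] → X denote their concatenation, defined by ⟨γ₁, …, γ_k⟩(s) = γᵢ(s − (i−1)) for s ∈ [i−1, i]. Then for every f ∈ E(k), the map t ↦ ⟨γ₁, …, γ_k⟩(f(t)) is a path from x₀ to x_k, and the resulting action map E(k) × Path(x_{k−1}, x_k) × ⋯ × Path(x₀, x₁) → Path(x₀, x_k) is continuous, where each path space Path(x, y) carries the compact-open topology. -/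
import Mathlib


/-!
STATEMENT 2: The operad spaces `E(k)` act on path spaces: given points
`x₀, …, x_k` of a space `X` and paths `γᵢ` from `x_{i−1}` to `xᵢ`, every `f ∈ E(k)`
produces a path `t ↦ ⟨γ₁, …, γ_k⟩(f(t))` from `x₀` to `x_k`, and the resulting
action map `E(k) × Path(x_{k−1}, x_k) × ⋯ × Path(x₀, x₁) → Path(x₀, x_k)` is
continuous (all path spaces carrying the compact-open topology).
-/

open scoped unitInterval

/-- The space `E k` of endpoint-preserving continuous maps `[0,1] → [0,k]`,
as a subspace of `C([0,1], ℝ)` with the compact-open topology. -/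
def TrimbleE (k : ℕ) : Type :=
  { f : C(I, ℝ) //
      (∀ t, f t ∈ Set.Icc (0 : ℝ) (k : ℝ)) ∧ f 0 = 0 ∧ f 1 = (k : ℝ) }

instance (k : ℕ) : TopologicalSpace (TrimbleE k) :=
  inferInstanceAs (TopologicalSpace
    { f : C(I, ℝ) //
        (∀ t, f t ∈ Set.Icc (0 : ℝ) (k : ℝ)) ∧ f 0 = 0 ∧ f 1 = (k : ℝ) })

/-- Concatenation `⟨γ₁, …, γ_k⟩ : [0,k] → X` of a string of `k` functions
`[0,1] → X`, regarded as a (total) function on `ℝ`: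
`⟨γ₁, …, γ_k⟩(s) = γᵢ(s − (i−1))` for `s ∈ [i−1, i]`.  (The value `d` is only used
in the degenerate case `k = 0`.) -/
noncomputable def concatFun {X : Type*} (d : X) (k : ℕ) (φ : Fin k → I → X) :
    ℝ → X := fun s =>
  if h : k = 0 then d
  else
    let i : Fin k := ⟨min ⌊s⌋₊ (k - 1), lt_of_le_of_lt (min_le_right _ _) (by omega)⟩
    φ i (Set.projIcc 0 1 zero_le_one (s - i.val))

lemma concatFun_apply {X : Type*} (d : X) {k : ℕ} (hk : k ≠ 0) (φ : Fin k → I → X) (s : ℝ)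
    {j : ℕ} (hj : j < k) (hmin : min ⌊s⌋₊ (k - 1) = j) :
    concatFun d k φ s = φ ⟨j, hj⟩ (Set.projIcc 0 1 zero_le_one (s - j)) := by
  subst hmin
  rw [concatFun, dif_neg hk]

lemma concatFun_eq {X : Type*} (d : X) {k : ℕ} (φ : Fin k → I → X)
    (hφ : ∀ (i : ℕ) (h : i + 1 < k),
      φ ⟨i, by omega⟩ 1 = φ ⟨i + 1, h⟩ 0)
    (i : Fin k) (s : ℝ) (hs : (i : ℝ) ≤ s) (hs' : s ≤ (i : ℝ) + 1) :
    concatFun d k φ s = φ i (Set.projIcc 0 1 zero_le_one (s - (i : ℝ))) := by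
  have hk : k ≠ 0 := by have := i.isLt; omega
  have h0 : (0 : ℝ) ≤ s := le_trans (by positivity) hs
  rcases lt_or_eq_of_le hs' with hlt | heq
  · have hfl : ⌊s⌋₊ = i.val := by
      rw [Nat.floor_eq_iff h0]
      exact ⟨hs, by exact_mod_cast hlt⟩
    rw [concatFun_apply d hk φ s i.isLt (by rw [hfl]; have := i.isLt; omega)]
  · have hfl : ⌊s⌋₊ = i.val + 1 := by
      rw [heq, show ((i.val:ℝ)+1) = ((i.val+1 : ℕ):ℝ) by push_cast; ring, Nat.floor_natCast]
    have e2 : s - (i : ℝ) = 1 := by rw [heq]; ring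
    rcases lt_or_eq_of_le (Nat.succ_le_of_lt i.isLt) with h2 | h2
    · rw [concatFun_apply d hk φ s h2 (by omega)]
      have e1 : s - ((i.val + 1 : ℕ) : ℝ) = 0 := by rw [heq]; push_cast; ring
      rw [e1, e2, Set.projIcc_left, Set.projIcc_right]
      exact (hφ i.val h2).symm
    · rw [concatFun_apply d hk φ s i.isLt (by omega)]


/-- The action of `E(k)` on strings of `k` composable paths: for `f ∈ E(k)` and
paths `γᵢ : x_{i-1} ⇝ xᵢ`, the function `t ↦ ⟨γ₁, …, γ_k⟩(f(t))` is a path from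
`x₀` to `x_k`, and the resulting action map
`E(k) × Path(x_{k−1}, x_k) × ⋯ × Path(x₀, x₁) → Path(x₀, x_k)` is continuous. -/
theorem stmt_2 {X : Type*} [TopologicalSpace X] (k : ℕ) (hk : 1 ≤ k)
    (x : Fin (k + 1) → X) :
    ∃ act : TrimbleE k → (∀ i : Fin k, Path (x i.castSucc) (x i.succ)) →
        Path (x 0) (x (Fin.last k)),
      (∀ (f : TrimbleE k) (p : ∀ i : Fin k, Path (x i.castSucc) (x i.succ)) (t : I),
          act f p t = concatFun (x 0) k (fun i => (p i : I → X)) (f.1 t)) ∧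
      Continuous (fun z : TrimbleE k × (∀ i : Fin k, Path (x i.castSucc) (x i.succ)) =>
        act z.1 z.2) := by
  have hk0 : k ≠ 0 := by omega
  set Z := TrimbleE k × (∀ i : Fin k, Path (x i.castSucc) (x i.succ)) with hZ
  -- composability
  have hcomp : ∀ (p : ∀ i : Fin k, Path (x i.castSucc) (x i.succ)) (i : ℕ) (h : i + 1 < k),
      (p ⟨i, by omega⟩ : I → X) 1 = (p ⟨i + 1, h⟩ : I → X) 0 := by
    intro p i h
    have e : (⟨i, by omega⟩ : Fin k).succ = (⟨i + 1, h⟩ : Fin k).castSucc := Fin.ext rfl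
    rw [Path.target, Path.source, e]
  -- the master map
  set F : Z × I → X := fun q =>
    concatFun (x 0) k (fun i => (q.1.2 i : I → X)) (q.1.1.1 q.2) with hF
  -- inner evaluation is continuous
  have hinner : Continuous fun q : Z × I => (q.1.1.1 : C(I, ℝ)) q.2 := by
    have h1 : Continuous fun q : Z × I => (q.1.1.1 : C(I, ℝ)) :=
      continuous_subtype_val.comp (continuous_fst.comp continuous_fst)
    exact h1.eval continuous_snd
  -- the pieces
  have hL : ∀ i : Fin k, Continuous fun q : Z × I =>
      (q.1.2 i : I → X) (Set.projIcc 0 1 zero_le_one ((q.1.1.1 : C(I, ℝ)) q.2 - (i : ℝ))) := by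
    intro i
    have hp : Continuous fun q : Z × I => q.1.2 i :=
      (continuous_apply i).comp (continuous_snd.comp continuous_fst)
    exact hp.eval (continuous_projIcc.comp (hinner.sub continuous_const))
  -- F is continuous
  have hFc : Continuous F := by
    apply (locallyFinite_of_finite
      (fun i : Fin k => {q : Z × I | (q.1.1.1 : C(I, ℝ)) q.2 ∈ Set.Icc (i : ℝ) ((i : ℝ) + 1)})).continuous
    · ext q
      simp only [Set.mem_iUnion, Set.mem_univ, iff_true, Set.mem_setOf_eq]
      set s := (q.1.1.1 : C(I, ℝ)) q.2 with hs
      have hmem : s ∈ Set.Icc (0 : ℝ) (k : ℝ) := q.1.1.2.1 q.2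
      by_cases hc : ⌊s⌋₊ ≤ k - 1
      · refine ⟨⟨⌊s⌋₊, by omega⟩, Nat.floor_le hmem.1, ?_⟩
        exact le_of_lt (Nat.lt_floor_add_one s)
      · refine ⟨⟨k - 1, by omega⟩, ?_, ?_⟩
        · have h3 : k ≤ ⌊s⌋₊ := by omega
          have : (k : ℝ) ≤ (⌊s⌋₊ : ℝ) := Nat.cast_le.mpr h3
          have h2 : (⌊s⌋₊ : ℝ) ≤ s := Nat.floor_le hmem.1
          push_cast [Nat.cast_sub hk]
          linarith
        · push_cast [Nat.cast_sub hk]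
          linarith [hmem.2]
    · intro i
      exact isClosed_Icc.preimage hinner
    · intro i
      apply ((hL i).continuousOn).congr
      intro q hq
      exact concatFun_eq (x 0) _ (hcomp q.1.2) i _ hq.1 hq.2
  -- the action
  have hsrc : ∀ z : Z, F (z, 0) = x 0 := by
    intro z
    have h0 : (z.1.1 : C(I, ℝ)) 0 = 0 := z.1.2.2.1
    show concatFun (x 0) k _ ((z.1.1 : C(I, ℝ)) 0) = x 0
    rw [h0, concatFun_eq (x 0) _ (hcomp z.2) ⟨0, by omega⟩ 0 (by simp) (by simp)]
    simp only [Fin.val_mk, Nat.cast_zero, sub_zero, Set.projIcc_left]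
    rw [Set.Icc.mk_zero, Path.source]
    congr 1
  have htgt : ∀ z : Z, F (z, 1) = x (Fin.last k) := by
    intro z
    have h1 : (z.1.1 : C(I, ℝ)) 1 = (k : ℝ) := z.1.2.2.2
    show concatFun (x 0) k _ ((z.1.1 : C(I, ℝ)) 1) = x (Fin.last k)
    have e : (k : ℝ) - ((k - 1 : ℕ) : ℝ) = 1 := by
      push_cast [Nat.cast_sub hk]; ring
    rw [h1, concatFun_eq (x 0) _ (hcomp z.2) ⟨k - 1, by omega⟩ (k : ℝ)
      (by push_cast [Nat.cast_sub hk]; linarith) (by push_cast [Nat.cast_sub hk]; linarith),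
      show ((⟨k - 1, by omega⟩ : Fin k) : ℝ) = ((k - 1 : ℕ) : ℝ) from rfl, e, Set.projIcc_right]
    rw [Set.Icc.mk_one, Path.target]
    congr 1
    exact Fin.ext (by simp [Fin.last]; omega)
  refine ⟨fun f p => ⟨⟨fun t => F ((f, p), t), ?_⟩, hsrc (f, p), htgt (f, p)⟩, fun f p t => rfl, ?_⟩
  · exact hFc.comp (Continuous.prodMk_right _)
  · exact Path.continuous_uncurry_iff.mp hFc
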